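/- arXiv:2402.07269 — 8 statements merged into one kernel-verified Lean document; each statement's English description precedes it below -/
import Mathlib

section
/- Let A and B be n×n complex matrices and let δ_k denote the operator sending a matrix to the matrix that agrees with it on the upper-left k×k block and on the diagonal, and is zero elsewhere. Then δ_{k}(δ_{k}A · B) = (δ_k A)(δ_k B) and δ_k(A · δ_k B) = (δ_k A)(δ_k B). -/
/-- The operator `δ_k` keeping the upper-left `k × k` block and the diagonal. -/
def deltaK (n k : ℕ) (A : Matrix (Fin n) (Fin n) ℂ) : Matrix (Fin n) (Fin n) ℂ :=
  Matrix.of fun i j => if (i.val < k ∧ j.val < k) ∨ i = j then A i j else 0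

/-- `δ_k(δ_k A · B) = (δ_k A)(δ_k B)` and `δ_k(A · δ_k B) = (δ_k A)(δ_k B)`. -/
theorem deltaK_mul_left_right (n k : ℕ) (A B : Matrix (Fin n) (Fin n) ℂ) :
    deltaK n k (deltaK n k A * B) = deltaK n k A * deltaK n k B ∧
      deltaK n k (A * deltaK n k B) = deltaK n k A * deltaK n k B := by
  constructor
  · ext i j
    simp only [deltaK, Matrix.mul_apply, Matrix.of_apply]
    split_ifs with h
    · refine Finset.sum_congr rfl fun l _ => ?_
      by_cases h1 : (i.val < k ∧ l.val < k) ∨ i = l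
      · have h2 : (l.val < k ∧ j.val < k) ∨ l = j := by
          rcases h1 with ⟨hi, hl⟩ | rfl
          · rcases h with ⟨hi', hj⟩ | rfl
            · exact Or.inl ⟨hl, hj⟩
            · exact Or.inl ⟨hl, hi⟩
          · rcases h with ⟨hi', hj⟩ | rfl
            · exact Or.inl ⟨hi', hj⟩
            · exact Or.inr rfl
        simp [h1, h2]
      · simp [h1]
    · refine (Finset.sum_eq_zero fun l _ => ?_).symm
      by_cases h1 : (i.val < k ∧ l.val < k) ∨ i = l
      · have h2 : ¬((l.val < k ∧ j.val < k) ∨ l = j) := by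
          rintro (⟨hl, hj⟩ | rfl)
          · rcases h1 with ⟨hi, _⟩ | rfl
            · exact h (Or.inl ⟨hi, hj⟩)
            · exact h (Or.inl ⟨hl, hj⟩)
          · rcases h1 with ⟨hi, hl⟩ | rfl
            · exact h (Or.inl ⟨hi, hl⟩)
            · exact h (Or.inr rfl)
        simp [h2]
      · simp [h1]
  · ext i j
    simp only [deltaK, Matrix.mul_apply, Matrix.of_apply]
    split_ifs with h
    · refine Finset.sum_congr rfl fun l _ => ?_
      by_cases h2 : (l.val < k ∧ j.val < k) ∨ l = j
      · have h1 : (i.val < k ∧ l.val < k) ∨ i = l := by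
          rcases h2 with ⟨hl, hj⟩ | rfl
          · rcases h with ⟨hi', hj'⟩ | rfl
            · exact Or.inl ⟨hi', hl⟩
            · exact Or.inl ⟨hj, hl⟩
          · rcases h with ⟨hi', hj'⟩ | rfl
            · exact Or.inl ⟨hi', hj'⟩
            · exact Or.inr rfl
        simp [h1, h2]
      · simp [h2]
    · refine (Finset.sum_eq_zero fun l _ => ?_).symm
      by_cases h2 : (l.val < k ∧ j.val < k) ∨ l = j
      · have h1 : ¬((i.val < k ∧ l.val < k) ∨ i = l) := by
          rintro (⟨hi, hl⟩ | rfl)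
          · rcases h2 with ⟨_, hj⟩ | rfl
            · exact h (Or.inl ⟨hi, hj⟩)
            · exact h (Or.inl ⟨hi, hl⟩)
          · rcases h2 with ⟨hl, hj⟩ | rfl
            · exact h (Or.inl ⟨hl, hj⟩)
            · exact h (Or.inr rfl)
        simp [h1]
      · simp [h2]
end

section
/- Let a be an n×m complex matrix and b an m×n complex matrix with b·a = 0, and let u be an n×n diagonal matrix such that b·u·a is invertible. Define Φ = u·a·(bua)⁻¹·b − a·(bua)⁻¹·b·u (i.e., Φ = ad_u(a(bua)⁻¹b)). Then Φ³ = Φ. -/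
set_option maxHeartbeats 1000000


/-- If `b·a = 0`, `u` is diagonal and `b·u·a` is invertible, then
`Φ = ad_u(a(bua)⁻¹b)` satisfies `Φ³ = Φ`. -/
theorem adu_rational_cube (n m : ℕ)
    (a : Matrix (Fin n) (Fin m) ℂ) (b : Matrix (Fin m) (Fin n) ℂ)
    (u : Matrix (Fin n) (Fin n) ℂ) (hu : u.IsDiag)
    (hba : b * a = 0) (hinv : IsUnit (b * u * a)) :
    (u * (a * (b * u * a)⁻¹ * b) - a * (b * u * a)⁻¹ * b * u) ^ 3
      = u * (a * (b * u * a)⁻¹ * b) - a * (b * u * a)⁻¹ * b * u := by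
  have hdet : IsUnit (b * u * a).det := (Matrix.isUnit_iff_isUnit_det _).mp hinv
  have h1 : (b * u * a) * (b * u * a)⁻¹ = 1 := Matrix.mul_nonsing_inv _ hdet
  have key : ∀ k (X : Matrix (Fin m) (Fin k) ℂ),
      b * (u * (a * ((b * u * a)⁻¹ * X))) = X := by
    intro k X
    calc b * (u * (a * ((b * u * a)⁻¹ * X)))
        = (b * u * a) * ((b * u * a)⁻¹ * X) := by
          simp only [Matrix.mul_assoc]
      _ = ((b * u * a) * (b * u * a)⁻¹) * X := (Matrix.mul_assoc _ _ _).symm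
      _ = X := by rw [h1, Matrix.one_mul]
  have hba' : ∀ k (X : Matrix (Fin m) (Fin k) ℂ), b * (a * X) = (0 : Matrix _ _ ℂ) := by
    intro k X
    rw [← Matrix.mul_assoc, hba, Matrix.zero_mul]
  have key' : b * (u * (a * ((b * u * a)⁻¹ * b))) = b := key _ b
  have hba'' : ∀ k (X : Matrix (Fin m) (Fin k) ℂ), b * (a * ((b*u*a)⁻¹ * X)) = 0 := by
    intro k X; rw [hba' _ _]
  set c := (b * u * a)⁻¹ with hc
  rw [pow_succ, pow_succ, pow_one]
  simp only [Matrix.sub_mul, Matrix.mul_sub, Matrix.add_mul, Matrix.mul_add,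
    Matrix.mul_assoc, key, hba', hba'',
    Matrix.mul_zero, Matrix.zero_mul, sub_zero, zero_sub, sub_neg_eq_add]
  abel
end

section
/- Let a be an n×m complex matrix and b an m×n complex matrix with b·a = 0, let u be diagonal n×n with b·u·a invertible, and set Φ = ad_u(a(bua)⁻¹b). Then the matrix P₁ := (I − (1/2)a(bua)⁻¹bu)·(ua(bua)⁻¹b) satisfies Φ·P₁ = P₁, i.e., P₁ projects onto (part of) the 1-eigenspace: ΦP₁ = P₁ and P₁ is idempotent. -/
private lemma aux_proj_one {R : Type*} [Ring R] [Algebra ℂ R] (k v : R)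
    (hkk : k * k = 0) (hkvk : k * v * k = k) :
    ((v * k - k * v) * ((1 - (2:ℂ)⁻¹ • (k * v)) * (v * k))
      = (1 - (2:ℂ)⁻¹ • (k * v)) * (v * k)) ∧
    (((1 - (2:ℂ)⁻¹ • (k * v)) * (v * k)) * ((1 - (2:ℂ)⁻¹ • (k * v)) * (v * k))
      = (1 - (2:ℂ)⁻¹ • (k * v)) * (v * k)) := by
  have hkk' : ∀ x : R, k * (k * x) = 0 := by
    intro x; rw [← mul_assoc, hkk, zero_mul]
  have hkvk' : ∀ x : R, k * (v * (k * x)) = k * x := by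
    intro x; rw [← mul_assoc, ← mul_assoc, hkvk]
  have hkvk0 : k * (v * k) = k := by rw [← mul_assoc, hkvk]
  constructor <;>
  · simp only [mul_sub, sub_mul, one_mul, mul_one, smul_mul_assoc, mul_smul_comm,
      mul_assoc, hkk', hkvk', hkvk0, smul_zero, mul_zero, zero_mul, smul_smul, sub_zero,
      zero_sub, smul_sub, smul_neg]
    try module

/-- With `b·a = 0`, `u` diagonal, `b·u·a` invertible and
`Φ = ad_u(a(bua)⁻¹b)`, the matrix
`P₁ = (I − (1/2)a(bua)⁻¹bu)·(ua(bua)⁻¹b)` satisfies `Φ·P₁ = P₁` and `P₁² = P₁`. -/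
theorem adu_rational_eigenprojection_one (n m : ℕ)
    (a : Matrix (Fin n) (Fin m) ℂ) (b : Matrix (Fin m) (Fin n) ℂ)
    (u : Matrix (Fin n) (Fin n) ℂ) (hu : u.IsDiag)
    (hba : b * a = 0) (hinv : IsUnit (b * u * a)) :
    (u * (a * (b * u * a)⁻¹ * b) - a * (b * u * a)⁻¹ * b * u) *
        ((1 - (2 : ℂ)⁻¹ • (a * (b * u * a)⁻¹ * b * u)) * (u * a * (b * u * a)⁻¹ * b))
      = (1 - (2 : ℂ)⁻¹ • (a * (b * u * a)⁻¹ * b * u)) * (u * a * (b * u * a)⁻¹ * b) ∧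
    ((1 - (2 : ℂ)⁻¹ • (a * (b * u * a)⁻¹ * b * u)) * (u * a * (b * u * a)⁻¹ * b)) *
        ((1 - (2 : ℂ)⁻¹ • (a * (b * u * a)⁻¹ * b * u)) * (u * a * (b * u * a)⁻¹ * b))
      = (1 - (2 : ℂ)⁻¹ • (a * (b * u * a)⁻¹ * b * u)) * (u * a * (b * u * a)⁻¹ * b) := by
  have hdet : IsUnit (b * u * a).det := (Matrix.isUnit_iff_isUnit_det _).mp hinv
  have hq : (b * u * a)⁻¹ * (b * u * a) = 1 := Matrix.nonsing_inv_mul _ hdet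
  set K : Matrix (Fin n) (Fin n) ℂ := a * (b * u * a)⁻¹ * b with hK
  have hassoc : u * a * (b * u * a)⁻¹ * b = u * K := by
    rw [hK, Matrix.mul_assoc, Matrix.mul_assoc, Matrix.mul_assoc, Matrix.mul_assoc]
  have hKK : K * K = 0 := by
    have h1 : K * K = a * (b * u * a)⁻¹ * (b * a * ((b * u * a)⁻¹ * b)) := by
      rw [hK]; simp only [Matrix.mul_assoc]
    rw [h1, hba, Matrix.zero_mul, Matrix.mul_zero]
  have hKuK : K * u * K = K := by
    have h1 : K * u * K = a * ((b * u * a)⁻¹ * (b * u * a) * ((b * u * a)⁻¹ * b)) := by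
      rw [hK]; simp only [Matrix.mul_assoc]
    rw [h1, hq, Matrix.one_mul, hK]; simp only [Matrix.mul_assoc]
  rw [hassoc]
  exact aux_proj_one K u hKK hKuK
end

section
/- Let a be an n×1 column vector and b a 1×n row vector (complex) with b·a = 0, and let u = diag(u₁,…,uₙ) be diagonal with b·u·a ≠ 0. Then Φ(u) := (1/(bua))·ad_u(ab) satisfies, for each k = 1,…,n, the n-th isomonodromy equation ∂Φ/∂u_k = [ad_u^{-1} ad_{E_k} Φ, Φ], where E_k is the diagonal matrix with 1 in position (k,k) and zeros elsewhere, and ad_u^{-1}A is the matrix with (i,j)-entry A_{ij}/(u_i−u_j) for i≠j and 0 on the diagonal. -/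
/-- `ad_u^{-1}A`: the matrix with entries `A_{ij}/(u_i − u_j)` off the diagonal
and `0` on the diagonal. -/
noncomputable def adInv (n : ℕ) (u : Fin n → ℂ) (A : Matrix (Fin n) (Fin n) ℂ) :
    Matrix (Fin n) (Fin n) ℂ :=
  Matrix.of fun i j => if i = j then 0 else A i j / (u i - u j)

/-- The rational matrix function `Φ(u) = (bua)⁻¹ ad_u(ab)`, for a column `a` and
row `b` with `b·a = 0`. -/
noncomputable def PhiRat (n : ℕ) (a : Matrix (Fin n) (Fin 1) ℂ)
    (b : Matrix (Fin 1) (Fin n) ℂ) (u : Fin n → ℂ) : Matrix (Fin n) (Fin n) ℂ :=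
  ((b * Matrix.diagonal u * a) 0 0)⁻¹ •
    (Matrix.diagonal u * (a * b) - (a * b) * Matrix.diagonal u)

lemma PhiRat_apply (n : ℕ) (a : Matrix (Fin n) (Fin 1) ℂ)
    (b : Matrix (Fin 1) (Fin n) ℂ) (v : Fin n → ℂ) (p q : Fin n) :
    PhiRat n a b v p q = (∑ m, b 0 m * v m * a m 0)⁻¹ * ((v p - v q) * (a p 0 * b 0 q)) := by
  simp [PhiRat, Matrix.mul_apply, Matrix.diagonal_apply, mul_ite, ite_mul, zero_mul, mul_zero,
    Finset.sum_ite_eq, Finset.sum_ite_eq']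
  ring_nf
  tauto

lemma stdBasis_mul_apply (n : ℕ) (Φ : Matrix (Fin n) (Fin n) ℂ) (k p q : Fin n) :
    (Matrix.single k k (1:ℂ) * Φ) p q = if p = k then Φ k q else 0 := by
  rw [Matrix.mul_apply]
  simp [Matrix.single, ite_and, eq_comm]

lemma mul_stdBasis_apply (n : ℕ) (Φ : Matrix (Fin n) (Fin n) ℂ) (k p q : Fin n) :
    (Φ * Matrix.single k k (1:ℂ)) p q = if q = k then Φ p k else 0 := by
  rw [Matrix.mul_apply]
  simp [Matrix.single, ite_and, eq_comm]

/-- `Φ(u) = (bua)⁻¹ ad_u(ab)` solves the `n`-th isomonodromy equation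
`∂Φ/∂u_k = [ad_u^{-1} ad_{E_k} Φ, Φ]` (partial derivatives taken entrywise). -/
theorem PhiRat_solves_isomonodromy (n : ℕ)
    (a : Matrix (Fin n) (Fin 1) ℂ) (b : Matrix (Fin 1) (Fin n) ℂ)
    (hba : b * a = 0) (u : Fin n → ℂ) (hu : Function.Injective u)
    (hbua : (b * Matrix.diagonal u * a) 0 0 ≠ 0) (k : Fin n) (i j : Fin n) :
    HasDerivAt (fun t => PhiRat n a b (Function.update u k t) i j)
      ((adInv n u (Matrix.single k k 1 * PhiRat n a b u
            - PhiRat n a b u * Matrix.single k k 1) * PhiRat n a b u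
        - PhiRat n a b u * adInv n u (Matrix.single k k 1 * PhiRat n a b u
            - PhiRat n a b u * Matrix.single k k 1)) i j)
      (u k) := by
  classical
  set s : ℂ := ∑ m, b 0 m * u m * a m 0 with hsdef
  have hsval : (b * Matrix.diagonal u * a) 0 0 = s := by
    simp [Matrix.mul_apply, Matrix.diagonal_apply, mul_ite, ite_mul, zero_mul, mul_zero,
      Finset.sum_ite_eq, Finset.sum_ite_eq', hsdef]
  have hsne : s ≠ 0 := hsval ▸ hbua
  have hsum0 : ∑ m, b 0 m * a m 0 = 0 := by
    have h : (b * a) 0 0 = 0 := by rw [hba]; rfl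
    rw [Matrix.mul_apply] at h
    exact h
  set Φ := PhiRat n a b u with hΦdef
  have hΦu : ∀ p q, Φ p q = s⁻¹ * ((u p - u q) * (a p 0 * b 0 q)) := fun p q =>
    PhiRat_apply n a b u p q
  set N := adInv n u (Matrix.single k k 1 * Φ - Φ * Matrix.single k k 1)
    with hNdef
  -- Entries of N
  have hN : ∀ p q, N p q =
      s⁻¹ * ((if p = k then a k 0 * b 0 q else 0) - (if q = k then a p 0 * b 0 k else 0)) := by
    intro p q
    rw [hNdef]
    simp only [adInv, Matrix.of_apply]
    by_cases hpq : p = q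
    · rw [if_pos hpq, hpq]
      by_cases hq : q = k
      · simp [hq]
      · simp [hq]
    · rw [if_neg hpq, Matrix.sub_apply, stdBasis_mul_apply, mul_stdBasis_apply]
      by_cases hp : p = k
      · have hq : ¬ q = k := fun h => hpq (hp.trans h.symm)
        rw [if_pos hp, if_neg hq, if_pos hp, if_neg hq, hΦu, hp]
        have hne : u k - u q ≠ 0 := sub_ne_zero.mpr fun h => hq (hu h).symm
        field_simp
        ring
      · rw [if_neg hp, if_neg hp]
        by_cases hq : q = k
        · rw [if_pos hq, if_pos hq, hΦu, hq]
          have hne : u p - u k ≠ 0 := sub_ne_zero.mpr fun h => hp (hu h)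
          field_simp
          ring
        · simp [hq]
  -- column and row sums
  have hcol : ∑ m, b 0 m * Φ m j = s⁻¹ * (s * b 0 j) := by
    have h1 : ∀ m ∈ Finset.univ, b 0 m * Φ m j
        = s⁻¹ * ((b 0 m * u m * a m 0) * b 0 j - (b 0 m * a m 0) * (u j * b 0 j)) := by
      intro m _; rw [hΦu]; ring
    rw [Finset.sum_congr rfl h1, ← Finset.mul_sum, Finset.sum_sub_distrib,
      ← Finset.sum_mul, ← Finset.sum_mul, hsum0, ← hsdef]
    ring
  have hrow : ∑ m, Φ i m * a m 0 = s⁻¹ * (-(s * a i 0)) := by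
    have h1 : ∀ m ∈ Finset.univ, Φ i m * a m 0
        = s⁻¹ * ((b 0 m * a m 0) * (u i * a i 0) - (b 0 m * u m * a m 0) * a i 0) := by
      intro m _; rw [hΦu]; ring
    rw [Finset.sum_congr rfl h1, ← Finset.mul_sum, Finset.sum_sub_distrib,
      ← Finset.sum_mul, ← Finset.sum_mul, hsum0, ← hsdef]
    ring
  -- the two product sums
  have hNΦ : (N * Φ) i j = (if i = k then s⁻¹ * (a k 0) * (s⁻¹ * (s * b 0 j)) else 0)
      - s⁻¹ * (a i 0 * b 0 k) * (s⁻¹ * ((u k - u j) * (a k 0 * b 0 j))) := by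
    rw [Matrix.mul_apply]
    by_cases hi : i = k
    · rw [if_pos hi]
      have h1 : ∀ m ∈ Finset.univ, N i m * Φ m j =
          s⁻¹ * a k 0 * (b 0 m * Φ m j)
          - (if m = k then s⁻¹ * (a i 0 * b 0 k) * Φ m j else 0) := by
        intro m _
        rw [hN]
        by_cases hm : m = k <;> simp [hm, hi] <;> ring
      rw [Finset.sum_congr rfl h1, Finset.sum_sub_distrib, ← Finset.mul_sum, hcol,
        Finset.sum_ite_eq' Finset.univ k (fun m => s⁻¹ * (a i 0 * b 0 k) * Φ m j)]
      simp [hΦu, hi]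
    · rw [if_neg hi]
      have h1 : ∀ m ∈ Finset.univ, N i m * Φ m j =
          0 - (if m = k then s⁻¹ * (a i 0 * b 0 k) * Φ m j else 0) := by
        intro m _
        rw [hN]
        by_cases hm : m = k <;> simp [hm, hi]
      rw [Finset.sum_congr rfl h1, Finset.sum_sub_distrib,
        Finset.sum_ite_eq' Finset.univ k (fun m => s⁻¹ * (a i 0 * b 0 k) * Φ m j)]
      simp [hΦu]
  have hΦN : (Φ * N) i j = s⁻¹ * ((u i - u k) * (a i 0 * b 0 k)) * (s⁻¹ * (a k 0 * b 0 j))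
      - (if j = k then s⁻¹ * (s⁻¹ * (-(s * a i 0))) * b 0 k else 0) := by
    rw [Matrix.mul_apply]
    by_cases hj : j = k
    · rw [if_pos hj]
      have h1 : ∀ m ∈ Finset.univ, Φ i m * N m j =
          (if m = k then Φ i m * (s⁻¹ * (a k 0 * b 0 j)) else 0)
          - s⁻¹ * (Φ i m * a m 0) * b 0 k := by
        intro m _
        rw [hN m j]
        by_cases hm : m = k <;> simp [hm, hj] <;> ring
      rw [Finset.sum_congr rfl h1, Finset.sum_sub_distrib,
        Finset.sum_ite_eq' Finset.univ k (fun m => Φ i m * (s⁻¹ * (a k 0 * b 0 j)))]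
      have h2 : ∑ m, s⁻¹ * (Φ i m * a m 0) * b 0 k
          = s⁻¹ * (∑ m, Φ i m * a m 0) * b 0 k := by
        rw [Finset.mul_sum, Finset.sum_mul]
      rw [h2, hrow]
      simp [hΦu]
    · rw [if_neg hj]
      have h1 : ∀ m ∈ Finset.univ, Φ i m * N m j =
          (if m = k then Φ i m * (s⁻¹ * (a k 0 * b 0 j)) else 0) - 0 := by
        intro m _
        rw [hN m j]
        by_cases hm : m = k <;> simp [hm, hj]
      rw [Finset.sum_congr rfl h1, Finset.sum_sub_distrib,
        Finset.sum_ite_eq' Finset.univ k (fun m => Φ i m * (s⁻¹ * (a k 0 * b 0 j)))]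
      simp [hΦu]
  -- derivative of the denominator
  -- derivative of the denominator
  have hSd : HasDerivAt (fun t => ∑ m, b 0 m * Function.update u k t m * a m 0)
      (b 0 k * a k 0) (u k) := by
    have heq : (fun t => ∑ m, b 0 m * Function.update u k t m * a m 0)
        = fun t => (b 0 k * a k 0) * t + ∑ m ∈ Finset.univ.erase k, b 0 m * u m * a m 0 := by
      funext t
      rw [← Finset.add_sum_erase _ _ (Finset.mem_univ k)]
      congr 1
      · rw [Function.update_self]; ring
      · exact Finset.sum_congr rfl fun m hm => by
          rw [Function.update_of_ne (Finset.ne_of_mem_erase hm)]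
    rw [heq]
    simpa using ((hasDerivAt_id (u k)).const_mul (b 0 k * a k 0)).add_const (∑ m ∈ Finset.univ.erase k, b 0 m * u m * a m 0)
  have hSval : (∑ m, b 0 m * Function.update u k (u k) m * a m 0) = s := by
    rw [Function.update_eq_self]
  -- derivative of the numerator entries
  have hupd : ∀ p : Fin n, HasDerivAt (fun t => Function.update u k t p)
      (if p = k then 1 else 0) (u k) := by
    intro p
    by_cases hp : p = k
    · have heq : (fun t : ℂ => Function.update u k t p) = fun t => t :=
        funext fun t => by rw [hp, Function.update_self]
      rw [heq, if_pos hp]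
      exact hasDerivAt_id (u k)
    · simpa [Function.update_of_ne hp, hp] using hasDerivAt_const (u k) (u p)
  have hnum : HasDerivAt
      (fun t => (Function.update u k t i - Function.update u k t j) * (a i 0 * b 0 j))
      (((if i = k then (1:ℂ) else 0) - (if j = k then 1 else 0)) * (a i 0 * b 0 j)) (u k) :=
    ((hupd i).sub (hupd j)).mul_const _
  have hSne : (∑ m, b 0 m * Function.update u k (u k) m * a m 0) ≠ 0 := by
    rw [hSval]; exact hsne
  have hinv := hSd.inv hSne
  have hmain := hinv.mul hnum
  have hfeq : (fun t => PhiRat n a b (Function.update u k t) i j)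
      = fun t => (∑ m, b 0 m * Function.update u k t m * a m 0)⁻¹ *
          ((Function.update u k t i - Function.update u k t j) * (a i 0 * b 0 j)) := by
    funext t
    exact PhiRat_apply n a b (Function.update u k t) i j
  rw [hfeq]
  refine hmain.congr_deriv ?_
  symm
  rw [Matrix.sub_apply, hNΦ, hΦN, hSval, Function.update_eq_self]
  by_cases hi : i = k <;> by_cases hj : j = k <;>
    simp only [hi, hj] <;> simp [← hsdef] <;> field_simp <;> ring
end

section
/- Let a be an n×m matrix and b an m×n matrix over ℂ with b·a = 0, u diagonal n×n with b·u·a invertible, and Φ = ad_u(a(bua)⁻¹b). Then the matrix P₀ := (I − a(bua)⁻¹bu)·(I − ua(bua)⁻¹b) satisfies Φ·P₀ = 0. -/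
set_option maxHeartbeats 2000000 in
/-- With `b·a = 0`, `u` diagonal, `b·u·a` invertible and
`Φ = ad_u(a(bua)⁻¹b)`, the matrix `P₀ = (I − a(bua)⁻¹bu)(I − ua(bua)⁻¹b)`
satisfies `Φ·P₀ = 0`. -/
theorem adu_rational_kernel_projection (n m : ℕ)
    (a : Matrix (Fin n) (Fin m) ℂ) (b : Matrix (Fin m) (Fin n) ℂ)
    (u : Matrix (Fin n) (Fin n) ℂ) (hu : u.IsDiag)
    (hba : b * a = 0) (hinv : IsUnit (b * u * a)) :
    (u * (a * (b * u * a)⁻¹ * b) - a * (b * u * a)⁻¹ * b * u) *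
        ((1 - a * (b * u * a)⁻¹ * b * u) * (1 - u * a * (b * u * a)⁻¹ * b)) = 0 := by
  have hd := (Matrix.isUnit_iff_isUnit_det _).mp hinv
  have h1 : (b * u * a) * (b * u * a)⁻¹ = 1 := Matrix.mul_nonsing_inv _ hd
  have h3 : ∀ X : Matrix (Fin m) (Fin n) ℂ, b * (a * X) = 0 := fun X => by
    rw [← Matrix.mul_assoc, hba, Matrix.zero_mul]
  have h4 : ∀ X : Matrix (Fin m) (Fin n) ℂ,
      b * (u * (a * ((b * (u * a))⁻¹ * X))) = X := fun X => by
    calc b * (u * (a * ((b * (u * a))⁻¹ * X)))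
        = ((b * u * a) * (b * u * a)⁻¹) * X := by
          simp only [Matrix.mul_assoc]
      _ = X := by rw [h1, Matrix.one_mul]
  simp only [mul_sub, sub_mul, mul_one, one_mul]
  simp only [Matrix.mul_assoc]
  simp only [h3, h4, Matrix.mul_zero, Matrix.zero_mul, zero_sub, sub_zero]
  abel
end

section
/- Let (c₁,…,c_k) be nonzero complex numbers and s a complex number with e^{2πis} = c₁⋯c_k. Then there exist complex numbers λ₁,…,λ_k such that e^{2πiλ_j} = c_j for all j, λ₁+⋯+λ_k = s, and |Re(λ_{j₁} − λ_{j₂})| ≤ 1 for all j₁, j₂. -/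
open Complex

/-- Given nonzero `c₁,…,c_k` and `s` with `e^{2πis} = c₁⋯c_k`, there exist
logarithms `λ_j` with `e^{2πiλ_j} = c_j`, `Σλ_j = s`, and
`|Re(λ_{j₁} − λ_{j₂})| ≤ 1` for all `j₁, j₂`. -/
theorem exists_balanced_logarithms (k : ℕ) (hk : 0 < k) (c : Fin k → ℂ) (s : ℂ)
    (hc : ∀ j, c j ≠ 0)
    (hs : Complex.exp (2 * (Real.pi : ℂ) * Complex.I * s) = ∏ j, c j) :
    ∃ lam : Fin k → ℂ,
      (∀ j, Complex.exp (2 * (Real.pi : ℂ) * Complex.I * lam j) = c j) ∧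
      (∑ j, lam j = s) ∧
      ∀ j₁ j₂, |(lam j₁ - lam j₂).re| ≤ 1 := by
  have hπ : (Real.pi : ℂ) ≠ 0 := by exact_mod_cast Real.pi_ne_zero
  set μ : Fin k → ℂ := fun j =>
    ((Complex.arg (c j) / (2 * Real.pi) : ℝ) : ℂ)
      - ((Real.log ‖c j‖ / (2 * Real.pi) : ℝ) : ℂ) * I with hμ
  have hμexp : ∀ j, 2 * (Real.pi : ℂ) * I * μ j = Complex.log (c j) := by
    intro j
    rw [Complex.log]
    simp only [hμ]
    push_cast
    field_simp
    ring_nf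
    rw [Complex.I_sq]
    ring
  have hexpμ : ∀ j, Complex.exp (2 * (Real.pi : ℂ) * I * μ j) = c j := by
    intro j; rw [hμexp j, Complex.exp_log (hc j)]
  have hreμ : ∀ j, (μ j).re = Complex.arg (c j) / (2 * Real.pi) := by
    intro j
    simp only [hμ, Complex.sub_re, Complex.ofReal_re, Complex.mul_re,
      Complex.ofReal_im, Complex.I_re, Complex.I_im]
    ring
  have hreμ_bound : ∀ j, |(μ j).re| ≤ 1 / 2 := by
    intro j
    rw [hreμ, abs_div, abs_of_pos (by positivity : (0:ℝ) < 2 * Real.pi)]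
    rw [div_le_div_iff₀ (by positivity) (by norm_num)]
    have := Complex.abs_arg_le_pi (c j)
    nlinarith [Real.pi_pos]
  have hsum : Complex.exp (2 * (Real.pi : ℂ) * I * ∑ j, μ j)
      = Complex.exp (2 * (Real.pi : ℂ) * I * s) := by
    rw [Finset.mul_sum, Complex.exp_sum, hs]
    exact Finset.prod_congr rfl fun j _ => hexpμ j
  obtain ⟨n, hn⟩ := Complex.exp_eq_exp_iff_exists_int.mp hsum
  have hIne : (2 * (Real.pi : ℂ) * I) ≠ 0 := by
    simp [Complex.I_ne_zero, hπ]
  have hn' : ∑ j, μ j = s + n := by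
    have : 2 * (Real.pi : ℂ) * I * (∑ j, μ j) = 2 * (Real.pi : ℂ) * I * (s + n) := by
      rw [hn]; ring
    exact mul_left_cancel₀ hIne this
  set q : ℤ := n / k with hq
  set r : ℕ := (n % k).toNat with hr
  have h0 : 0 ≤ n % (k:ℤ) := Int.emod_nonneg n (by exact_mod_cast hk.ne')
  have hrk : r < k := by
    have h1 : n % (k:ℤ) < k := Int.emod_lt_of_pos n (by exact_mod_cast hk)
    omega
  have hnqr : n = k * q + r := by
    have h2 : ((r:ℤ)) = n % k := Int.toNat_of_nonneg h0
    have h3 := Int.mul_ediv_add_emod n k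
    rw [hq, h2]
    linarith
  set σ : Equiv.Perm (Fin k) := Tuple.sort (fun i => (μ i).re) with hσ
  have hmono : Monotone ((fun i => (μ i).re) ∘ σ) := Tuple.monotone_sort _
  set ε : Fin k → ℂ := fun i => if k - r ≤ (i : ℕ) then 1 else 0 with hε
  have hre : ∀ j, (μ j - q - ε (σ.symm j)).re
      = (μ j).re - q - (if k - r ≤ ((σ.symm j : Fin k) : ℕ) then (1:ℝ) else 0) := by
    intro j
    by_cases h : k - r ≤ ((σ.symm j : Fin k) : ℕ)
    · simp only [hε, if_pos h, Complex.sub_re, Complex.intCast_re, Complex.one_re]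
    · simp only [hε, if_neg h, Complex.sub_re, Complex.intCast_re, Complex.zero_re]
  refine ⟨fun j => μ j - q - ε (σ.symm j), ?_, ?_, ?_⟩
  · intro j
    have hkey : 2 * (Real.pi : ℂ) * I * (μ j - q - ε (σ.symm j))
        = 2 * (Real.pi : ℂ) * I * μ j + (-(q : ℂ) - ε (σ.symm j)) * (2 * (Real.pi : ℂ) * I) := by
      ring
    rw [hkey, Complex.exp_add, hexpμ]
    have hint : ∃ m : ℤ, (-(q : ℂ) - ε (σ.symm j)) = (m : ℂ) := by
      by_cases h : k - r ≤ ((σ.symm j : Fin k) : ℕ)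
      · refine ⟨-q - 1, ?_⟩
        simp only [hε, if_pos h]
        push_cast; ring
      · refine ⟨-q, ?_⟩
        simp only [hε, if_neg h]
        push_cast; ring
    obtain ⟨m, hm⟩ := hint
    rw [hm, Complex.exp_int_mul_two_pi_mul_I, mul_one]
  · have hεsum : ∑ j, ε (σ.symm j) = (r : ℂ) := by
      rw [Equiv.sum_comp σ.symm ε]
      simp only [hε]
      rw [Fin.sum_univ_eq_sum_range (fun i => if k - r ≤ i then (1:ℂ) else 0)]
      rw [Finset.range_eq_Ico,
        ← Finset.sum_Ico_consecutive _ (Nat.zero_le (k - r)) (by omega : k - r ≤ k)]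
      have h1 : ∑ i ∈ Finset.Ico 0 (k - r), (if k - r ≤ i then (1:ℂ) else 0) = 0 :=
        Finset.sum_eq_zero fun i hi => by
          rw [Finset.mem_Ico] at hi; rw [if_neg (by omega)]
      have h2 : ∑ i ∈ Finset.Ico (k - r) k, (if k - r ≤ i then (1:ℂ) else 0) = (r : ℂ) := by
        rw [Finset.sum_congr rfl
          (fun i hi => if_pos (Finset.mem_Ico.mp hi).1)]
        rw [Finset.sum_const, Nat.card_Ico, Nat.sub_sub_self hrk.le]
        simp
      rw [h1, h2, zero_add]
    have hsumval : ∑ j, (μ j - (q:ℂ) - ε (σ.symm j)) = (∑ j, μ j) - k * q - r := by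
      rw [Finset.sum_sub_distrib, Finset.sum_sub_distrib, hεsum, Finset.sum_const,
        Finset.card_univ, Fintype.card_fin]
      push_cast; ring
    rw [hsumval, hn']
    have hcast : ((n : ℂ)) = k * q + r := by exact_mod_cast hnqr
    rw [hcast]; ring
  · intro j₁ j₂
    show |((μ j₁ - q - ε (σ.symm j₁)) - (μ j₂ - q - ε (σ.symm j₂))).re| ≤ 1
    rw [Complex.sub_re, hre, hre]
    rcases abs_le.mp (hreμ_bound j₁) with ⟨h1l, h1r⟩
    rcases abs_le.mp (hreμ_bound j₂) with ⟨h2l, h2r⟩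
    by_cases h₁ : k - r ≤ ((σ.symm j₁ : Fin k) : ℕ) <;>
      by_cases h₂ : k - r ≤ ((σ.symm j₂ : Fin k) : ℕ)
    · rw [if_pos h₁, if_pos h₂, abs_le]; constructor <;> linarith
    · have hlt : σ.symm j₂ ≤ σ.symm j₁ := by rw [Fin.le_def]; omega
      have hmle : (μ j₂).re ≤ (μ j₁).re := by
        have := hmono hlt
        simpa using this
      rw [if_pos h₁, if_neg h₂, abs_le]; constructor <;> linarith
    · have hlt : σ.symm j₁ ≤ σ.symm j₂ := by rw [Fin.le_def]; omega
      have hmle : (μ j₁).re ≤ (μ j₂).re := by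
        have := hmono hlt
        simpa using this
      rw [if_neg h₁, if_pos h₂, abs_le]; constructor <;> linarith
    · rw [if_neg h₁, if_neg h₂, abs_le]; constructor <;> linarith
end

section
/- Define sequences of nonnegative reals by y₀ = 1 and (m+1)y_{m+1} = Σ_{i=1}^{m} y_i y_{m+1−i} + Σ_{p=1}^{m+1} Σ_{i=0}^{m+1−p} y_i y_{m+1−p−i} for m ≥ 0. Then y_m = 2^{m−1} for all m ≥ 1. -/
noncomputable def fseq : ℕ → ℝ := fun k => if k = 0 then 1 else 2 ^ (k - 1)

lemma T_succ (k : ℕ) :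
    ∑ i ∈ Finset.range (k + 2), fseq i * fseq (k + 1 - i)
      = 2 ^ (k + 1) + (k : ℝ) * 2 ^ (k + 1) / 4 := by
  rw [Finset.sum_range_succ', Finset.sum_range_succ]
  have h : ∀ i ∈ Finset.range k, fseq (i + 1) * fseq (k + 1 - (i + 1)) = (2 : ℝ) ^ (k - 1) := by
    intro i hi
    simp only [Finset.mem_range] at hi
    have h1 : fseq (i + 1) = 2 ^ i := by simp [fseq]
    have h2 : fseq (k + 1 - (i + 1)) = 2 ^ (k - i - 1) := by
      rw [fseq, if_neg (by omega)]
      congr 1; omega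
    rw [h1, h2, ← pow_add]
    congr 1; omega
  rw [Finset.sum_congr rfl h, Finset.sum_const, Finset.card_range]
  simp only [Nat.sub_self, Nat.sub_zero, nsmul_eq_mul]
  have hk1 : fseq (k + 1) = 2 ^ k := by simp [fseq]
  have h0 : fseq 0 = 1 := by simp [fseq]
  rw [hk1, h0]
  rcases k with _ | j
  · norm_num
  · simp only [Nat.add_sub_cancel]
    push_cast
    rw [show j + 1 + 1 = j + 2 from rfl, pow_succ, pow_succ, pow_succ]
    ring

lemma A_eq : ∀ m : ℕ, 1 ≤ m →
    ∑ n ∈ Finset.range (m + 1), ∑ i ∈ Finset.range (n + 1), fseq i * fseq (n - i)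
      = ((m : ℝ) + 2) * 2 ^ m / 2 := by
  intro m hm
  induction m, hm using Nat.le_induction with
  | base =>
    simp [Finset.sum_range_succ, fseq]
    norm_num
  | succ m hm ih =>
    rw [Finset.sum_range_succ, ih]
    have := T_succ m
    rw [show m + 1 + 1 = m + 2 from rfl, this]
    push_cast
    ring

lemma S1_eq (m : ℕ) :
    ∑ i ∈ Finset.Icc 1 m, fseq i * fseq (m + 1 - i) = (m : ℝ) * 2 ^ m / 2 := by
  rcases m with _ | k
  · simp
  · have h : ∀ i ∈ Finset.Icc 1 (k + 1), fseq i * fseq (k + 1 + 1 - i) = (2 : ℝ) ^ k := by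
      intro i hi
      simp only [Finset.mem_Icc] at hi
      rw [fseq, if_neg (by omega), fseq, if_neg (by omega), ← pow_add]
      congr 1; omega
    rw [Finset.sum_congr rfl h, Finset.sum_const, Nat.card_Icc, nsmul_eq_mul]
    simp only [Nat.add_sub_cancel]
    push_cast
    rw [pow_succ]
    ring

lemma S2_eq (m : ℕ) :
    ∑ p ∈ Finset.Icc 1 (m + 1), ∑ i ∈ Finset.range (m + 2 - p), fseq i * fseq (m + 1 - p - i)
      = ∑ n ∈ Finset.range (m + 1), ∑ i ∈ Finset.range (n + 1), fseq i * fseq (n - i) := by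
  apply Finset.sum_nbij' (fun p => m + 1 - p) (fun n => m + 1 - n)
  · intro p hp; simp only [Finset.mem_Icc] at hp; simp only [Finset.mem_range]; omega
  · intro n hn; simp only [Finset.mem_range] at hn; simp only [Finset.mem_Icc]; omega
  · intro p hp; simp only [Finset.mem_Icc] at hp; omega
  · intro n hn; simp only [Finset.mem_range] at hn; omega
  · intro p hp
    simp only [Finset.mem_Icc] at hp
    have h1 : m + 2 - p = (m + 1 - p) + 1 := by omega
    rw [h1]

lemma key (m : ℕ) :
    (∑ i ∈ Finset.Icc 1 m, fseq i * fseq (m + 1 - i)) +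
      ∑ p ∈ Finset.Icc 1 (m + 1), ∑ i ∈ Finset.range (m + 2 - p),
        fseq i * fseq (m + 1 - p - i) = ((m : ℝ) + 1) * 2 ^ m := by
  rw [S1_eq, S2_eq]
  rcases m with _ | k
  · simp [fseq]
  · rw [A_eq (k + 1) (by omega)]
    push_cast
    ring

/-- The majorizing sequence `y₀ = 1`,
`(m+1)y_{m+1} = Σ_{i=1}^m y_i y_{m+1−i} + Σ_{p=1}^{m+1} Σ_{i=0}^{m+1−p} y_i y_{m+1−p−i}`
satisfies `y_m = 2^{m−1}` for all `m ≥ 1`. -/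
theorem majorizing_sequence_eq (y : ℕ → ℝ) (h0 : y 0 = 1)
    (hrec : ∀ m : ℕ, ((m : ℝ) + 1) * y (m + 1) =
      (∑ i ∈ Finset.Icc 1 m, y i * y (m + 1 - i)) +
      ∑ p ∈ Finset.Icc 1 (m + 1), ∑ i ∈ Finset.range (m + 2 - p),
        y i * y (m + 1 - p - i)) :
    ∀ m : ℕ, 1 ≤ m → y m = 2 ^ (m - 1) := by
  have hf : ∀ m, y m = fseq m := by
    intro m
    induction m using Nat.strong_induction_on with
    | _ m ih =>
      match m with
      | 0 => simp [fseq, h0]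
      | k + 1 =>
        have h := hrec k
        have e1 : ∑ i ∈ Finset.Icc 1 k, y i * y (k + 1 - i)
            = ∑ i ∈ Finset.Icc 1 k, fseq i * fseq (k + 1 - i) := by
          apply Finset.sum_congr rfl
          intro i hi
          simp only [Finset.mem_Icc] at hi
          rw [ih i (by omega), ih (k + 1 - i) (by omega)]
        have e2 : ∑ p ∈ Finset.Icc 1 (k + 1), ∑ i ∈ Finset.range (k + 2 - p),
              y i * y (k + 1 - p - i)
            = ∑ p ∈ Finset.Icc 1 (k + 1), ∑ i ∈ Finset.range (k + 2 - p),
              fseq i * fseq (k + 1 - p - i) := by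
          apply Finset.sum_congr rfl
          intro p hp
          simp only [Finset.mem_Icc] at hp
          apply Finset.sum_congr rfl
          intro i hi
          simp only [Finset.mem_range] at hi
          rw [ih i (by omega), ih (k + 1 - p - i) (by omega)]
        rw [e1, e2, key k] at h
        have hk : ((k : ℝ) + 1) ≠ 0 := by positivity
        have := mul_left_cancel₀ hk h
        rw [this, fseq, if_neg (by omega)]
        simp
  intro m hm
  rw [hf m, fseq, if_neg (by omega)]
end

section
/- Let u = diag(u₁,…,uₙ) with distinct entries, k ≤ n, and define D = diag(1/(u_k−u₁),…,1/(u_k−u_{k-1}), 0, 0,…,0) (with 0 at position k and beyond). Then for any n×n matrix A, (ad_u^{-1} ∘ ad_{E_k})(δ_k A) = −(ad_D ∘ ad_{E_k})(δ_k A), where E_k is the elementary diagonal matrix with 1 at (k,k) and δ_k keeps the upper-left k×k block and the diagonal. -/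
open Matrix

/-- `δ_k` for `k : Fin n` (1-based block of size `k+1`): keeps the entries with
both indices `≤ k`, and the diagonal. -/
def deltaLe (n : ℕ) (k : Fin n) (A : Matrix (Fin n) (Fin n) ℂ) :
    Matrix (Fin n) (Fin n) ℂ :=
  Matrix.of fun i j => if (i ≤ k ∧ j ≤ k) ∨ i = j then A i j else 0

/-- `(ad_u^{-1} ∘ ad_{E_k})(δ_k A) = −(ad_D ∘ ad_{E_k})(δ_k A)` with
`D = diag(1/(u_k−u₁),…,1/(u_k−u_{k−1}),0,…,0)`. -/
theorem adInv_adEk_deltaK (n : ℕ) (u : Fin n → ℂ) (hu : Function.Injective u)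
    (k : Fin n) (A : Matrix (Fin n) (Fin n) ℂ) :
    adInv n u (Matrix.single k k 1 * deltaLe n k A
        - deltaLe n k A * Matrix.single k k 1)
      = -(Matrix.diagonal (fun i => if i < k then (u k - u i)⁻¹ else 0) *
            (Matrix.single k k 1 * deltaLe n k A
              - deltaLe n k A * Matrix.single k k 1)
          - (Matrix.single k k 1 * deltaLe n k A
              - deltaLe n k A * Matrix.single k k 1) *
            Matrix.diagonal (fun i => if i < k then (u k - u i)⁻¹ else 0)) := by
  set B := deltaLe n k A with hB
  set d : Fin n → ℂ := fun i => if i < k then (u k - u i)⁻¹ else 0 with hd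
  set M := Matrix.single k k 1 * B - B * Matrix.single k k 1 with hMdef
  have hM : ∀ i j : Fin n, M i j = (if i = k then B k j else 0) - (if j = k then B i k else 0) := by
    intro i j
    simp only [hMdef, Matrix.sub_apply, Matrix.mul_apply, Matrix.single,
      Matrix.of_apply, ite_and, mul_ite, ite_mul, mul_zero, zero_mul, mul_one, one_mul,
      Finset.sum_ite_eq, Finset.sum_ite_eq', Finset.mem_univ, if_true]
    congr 1 <;> [skip; rw [eq_comm]] <;> congr 1 <;> simp [eq_comm]
  ext i j
  rw [show (-(Matrix.diagonal d * M - M * Matrix.diagonal d)) i j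
      = -(d i * M i j - M i j * d j) by
    simp [Matrix.diagonal_mul, Matrix.mul_diagonal]]
  rw [show adInv n u M i j = if i = j then 0 else M i j / (u i - u j) from rfl]
  rw [hM i j]
  rcases eq_or_ne i j with heq | hij
  · subst heq
    rw [if_pos rfl]
    ring
  · rw [if_neg hij]
    have hBapp : ∀ a b : Fin n, B a b = if (a ≤ k ∧ b ≤ k) ∨ a = b then A a b else 0 := fun a b => rfl
    rcases eq_or_ne i k with heq | hik
    · subst heq
      have hjk : j ≠ i := fun h => hij h.symm
      rw [if_pos rfl, if_neg hjk, hBapp]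
      have hkj : ¬ i = j := hij
      simp only [le_refl, true_and, hkj, or_false]
      rcases lt_or_ge j i with h | h
      · have huv : u i - u j ≠ 0 := sub_ne_zero.2 fun h => hij (hu h)
        simp only [hd, if_pos (le_of_lt h), if_pos h, if_neg (lt_irrefl i)]
        field_simp
        ring
      · have h1 : ¬ j ≤ i := fun hle => hjk (le_antisymm hle h)
        simp [hd, h1, not_lt_of_ge h]
    · rw [if_neg hik]
      rcases eq_or_ne j k with heq | hjk
      · subst heq
        rw [if_pos rfl, hBapp]
        simp only [le_refl, and_true, hik, or_false]
        rcases lt_or_ge i j with h | h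
        · have huv : u j - u i ≠ 0 := sub_ne_zero.2 fun h => hik (hu h).symm
          have huv' : u i - u j ≠ 0 := fun h0 => huv (by linear_combination -h0)
          simp only [hd, if_pos (le_of_lt h), if_pos h, if_neg (lt_irrefl j)]
          field_simp
          ring
        · have h1 : ¬ i ≤ j := fun hle => hik (le_antisymm hle h)
          simp [hd, h1, not_lt_of_ge h]
      · simp [hjk]
end
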